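/- Let E₁ and E₂ be two ellipses in ℝ² centered at the origin. Then for every t ∈ ℝ², area(E₁ ∩ (t + E₂)) ≤ area(E₁ ∩ E₂). That is, the translation maximizing the area of overlap of the two ellipses is the one in which their centers coincide. -/

import Mathlib

open MeasureTheory Pointwise

noncomputable section

abbrev Plane := EuclideanSpace ℝ (Fin 2)

/-- An ellipse centered at the origin: the image of the closed unit disk
under an invertible linear map of the plane. -/
def IsOriginEllipse (E : Set Plane) : Prop :=
  ∃ L : Plane ≃ₗ[ℝ] Plane, E = L '' Metric.closedBall 0 1

/-! Let `A = E₁ ∩ (t + E₂)`. Both ellipses are convex and centrally symmetric, so the halved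
difference body `½(A - A)` lies in `E₁ ∩ E₂`, and it remains to show `area A ≤ area ½(A - A)` for
compact convex `A` (a case of Brunn–Minkowski). Slice `A` along the first coordinate and let `c` be
the midpoint of its projection. The one-dimensional inequality `|I| + |J| ≤ |I + J|` gives
`|A_w| + |A_{2c-w}| ≤ 2 |(½(A - A))_{w-c}|`, and integrating over `w` gives the claim. -/

theorem Real.volume_add_volume_le_volume_add {I J : Set ℝ} (hI : IsCompact I) (hJ : IsCompact J)
    (hI₀ : I.Nonempty) (hJ₀ : J.Nonempty) : volume I + volume J ≤ volume (I + J) := by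
  set a := sSup I
  set b := sInf J
  have hb_add : b +ᵥ I ⊆ I + J := by
    rintro _ ⟨x, hx, rfl⟩
    exact ⟨x, hx, b, hJ.sInf_mem hJ₀, add_comm _ _⟩
  have ha_add : a +ᵥ J ⊆ I + J := Set.vadd_set_subset_add (hI.sSup_mem hI₀)
  -- the two translates meet only in `a + b`
  have hdisj : AEDisjoint volume (b +ᵥ I) (a +ᵥ J) := by
    refine measure_mono_null (t := {a + b}) ?_ (measure_singleton _)
    rintro _ ⟨⟨x, hx, rfl⟩, ⟨y, hy, hxy⟩⟩
    have := le_csSup hI.bddAbove hx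
    have := csInf_le hJ.bddBelow hy
    simp only [vadd_eq_add, Set.mem_singleton_iff] at hxy ⊢
    linarith
  calc volume I + volume J = volume (b +ᵥ I) + volume (a +ᵥ J) := by
        rw [measure_vadd, measure_vadd]
    _ = volume ((b +ᵥ I) ∪ (a +ᵥ J)) :=
        (measure_union₀ (hJ.vadd a).measurableSet.nullMeasurableSet hdisj).symm
    _ ≤ volume (I + J) := measure_mono (Set.union_subset hb_add ha_add)

theorem IsCompact.preimage_prodMk {α β : Type*} [TopologicalSpace α] [TopologicalSpace β]
    [T2Space α] [T2Space β] {A : Set (α × β)} (hA : IsCompact A) (w : α) :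
    IsCompact (Prod.mk w ⁻¹' A) :=
  (hA.image continuous_snd).of_isClosed_subset (hA.isClosed.preimage (Continuous.prodMk_right w))
    fun _ hy => ⟨_, hy, rfl⟩

theorem Real.volume_half_smul (s : Set ℝ) : volume ((2:ℝ)⁻¹ • s) = 2⁻¹ * volume s := by
  rw [Measure.addHaar_smul, Module.finrank_self, pow_one, abs_of_pos (by norm_num),
    ENNReal.ofReal_inv_of_pos two_pos, ENNReal.ofReal_ofNat]

theorem IsCompact.volume_add_volume_le_two_mul_volume_slice_half_smul_sub {A : Set (ℝ × ℝ)}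
    (hA : IsCompact A) {w w' : ℝ} (hw : (Prod.mk w ⁻¹' A).Nonempty)
    (hw' : (Prod.mk w' ⁻¹' A).Nonempty) :
    volume (Prod.mk w ⁻¹' A) + volume (Prod.mk w' ⁻¹' A) ≤
      2 * volume (Prod.mk ((w - w') / 2) ⁻¹' ((2:ℝ)⁻¹ • (A - A))) := by
  have hsub : (2:ℝ)⁻¹ • (Prod.mk w ⁻¹' A - Prod.mk w' ⁻¹' A) ⊆
      Prod.mk ((w - w') / 2) ⁻¹' ((2:ℝ)⁻¹ • (A - A)) := by
    rintro _ ⟨_, ⟨u, hu, v, hv, rfl⟩, rfl⟩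
    refine ⟨(w, u) - (w', v), Set.sub_mem_sub hu hv, ?_⟩
    simp only [Prod.mk_sub_mk, Prod.smul_mk, smul_eq_mul]
    congr 1; ring
  calc volume (Prod.mk w ⁻¹' A) + volume (Prod.mk w' ⁻¹' A)
      = volume (Prod.mk w ⁻¹' A) + volume (-(Prod.mk w' ⁻¹' A)) := by rw [Measure.measure_neg]
    _ ≤ volume (Prod.mk w ⁻¹' A - Prod.mk w' ⁻¹' A) := by
      rw [sub_eq_add_neg]
      exact Real.volume_add_volume_le_volume_add (hA.preimage_prodMk w)
        (hA.preimage_prodMk w').neg hw hw'.neg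
    _ = 2 * volume ((2:ℝ)⁻¹ • (Prod.mk w ⁻¹' A - Prod.mk w' ⁻¹' A)) := by
      rw [Real.volume_half_smul, ← mul_assoc,
        ENNReal.mul_inv_cancel two_ne_zero ENNReal.ofNat_ne_top, one_mul]
    _ ≤ _ := by gcongr

theorem IsCompact.volume_le_volume_half_smul_sub_self_of_slice_nonempty {A : Set (ℝ × ℝ)}
    (hA : IsCompact A) (c : ℝ)
    (hc : ∀ w, (Prod.mk w ⁻¹' A).Nonempty → (Prod.mk (2 * c - w) ⁻¹' A).Nonempty) :
    volume A ≤ volume ((2:ℝ)⁻¹ • (A - A)) := by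
  set B := (2:ℝ)⁻¹ • (A - A)
  have hB : IsCompact B := by simpa only [B, sub_eq_add_neg] using (hA.add hA.neg).smul (2:ℝ)⁻¹
  have hslice : ∀ w, volume (Prod.mk w ⁻¹' A) + volume (Prod.mk (2 * c - w) ⁻¹' A) ≤
      2 * volume (Prod.mk (w - c) ⁻¹' B) := by
    intro w
    rcases (Prod.mk w ⁻¹' A).eq_empty_or_nonempty with hw | hw
    · have hw' : Prod.mk (2 * c - w) ⁻¹' A = ∅ := by
        by_contra! h
        simpa [hw] using hc _ h
      simp [hw, hw']
    · have := hA.volume_add_volume_le_two_mul_volume_slice_half_smul_sub hw (hc w hw)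
      rwa [show (w - (2 * c - w)) / 2 = w - c by ring] at this
  have hvol : ∀ S : Set (ℝ × ℝ), MeasurableSet S → volume S = ∫⁻ w, volume (Prod.mk w ⁻¹' S) :=
    fun S hS => by rw [Measure.volume_eq_prod, Measure.prod_apply hS]
  have hA_meas := measurable_measure_prodMk_left (ν := volume) hA.measurableSet
  refine (ENNReal.mul_le_mul_iff_right two_ne_zero ENNReal.ofNat_ne_top).mp ?_
  calc 2 * volume A = volume A + volume A := two_mul _
    _ = ∫⁻ w, volume (Prod.mk w ⁻¹' A) + volume (Prod.mk (2 * c - w) ⁻¹' A) := by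
      rw [lintegral_add_left hA_meas,
        lintegral_sub_left_eq_self (fun w => volume (Prod.mk w ⁻¹' A)), ← hvol A hA.measurableSet]
    _ ≤ ∫⁻ w, 2 * volume (Prod.mk (w - c) ⁻¹' B) := lintegral_mono hslice
    _ = 2 * volume B := by
      rw [lintegral_const_mul' _ _ ENNReal.ofNat_ne_top,
        lintegral_sub_right_eq_self (fun w => volume (Prod.mk w ⁻¹' B)), hvol B hB.measurableSet]

theorem Convex.volume_le_volume_half_smul_sub_self_prod {A : Set (ℝ × ℝ)} (hconv : Convex ℝ A)
    (hA : IsCompact A) : volume A ≤ volume ((2:ℝ)⁻¹ • (A - A)) := by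
  rcases A.eq_empty_or_nonempty with rfl | hA₀
  · simp
  have hP : IsCompact (Prod.fst '' A) := hA.image continuous_fst
  have hP₀ : (Prod.fst '' A).Nonempty := hA₀.image _
  have hslice : ∀ w, (Prod.mk w ⁻¹' A).Nonempty ↔ w ∈ Prod.fst '' A := fun w =>
    ⟨fun ⟨y, hy⟩ => ⟨(w, y), hy, rfl⟩, fun ⟨⟨_, y⟩, hy, hx⟩ => ⟨y, hx ▸ hy⟩⟩
  -- the projection is an interval, symmetric about its midpoint
  refine hA.volume_le_volume_half_smul_sub_self_of_slice_nonempty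
    ((sInf (Prod.fst '' A) + sSup (Prod.fst '' A)) / 2) fun w hw => ?_
  rw [hslice] at hw ⊢
  have := csInf_le hP.bddBelow hw
  have := le_csSup hP.bddAbove hw
  exact (hconv.linear_image (LinearMap.fst ℝ ℝ ℝ)).ordConnected.out (hP.sInf_mem hP₀)
    (hP.sSup_mem hP₀) ⟨by linarith, by linarith⟩

def Plane.equivProd : Plane ≃L[ℝ] ℝ × ℝ :=
  (EuclideanSpace.equiv (Fin 2) ℝ).trans (ContinuousLinearEquiv.finTwoArrow ℝ ℝ)

theorem Plane.volume_image_equivProd (S : Set Plane) :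
    volume (Plane.equivProd '' S) = volume S := by
  have h : MeasurePreserving Plane.equivProd.toHomeomorph.toMeasurableEquiv :=
    (volume_preserving_finTwoArrow ℝ).comp (PiLp.volume_preserving_ofLp (Fin 2))
  rw [← h.measure_preimage_equiv]
  exact congrArg volume (Plane.equivProd.preimage_image S)

theorem Convex.volume_le_volume_half_smul_sub_self {A : Set Plane} (hconv : Convex ℝ A)
    (hA : IsCompact A) : volume A ≤ volume ((2:ℝ)⁻¹ • (A - A)) := by
  have := (hconv.linear_image Plane.equivProd.toLinearMap).volume_le_volume_half_smul_sub_self_prod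
    (hA.image Plane.equivProd.continuous)
  rwa [LinearEquiv.coe_coe, ContinuousLinearEquiv.coe_toLinearEquiv, ← Set.image_sub,
    ← image_smul_set, Plane.volume_image_equivProd, Plane.volume_image_equivProd] at this

theorem Convex.half_smul_sub_subset {V : Type*} [AddCommGroup V] [Module ℝ V] {E A : Set V}
    (hconv : Convex ℝ E) (hneg : ∀ x ∈ E, -x ∈ E) {t : V} (hA : A ⊆ t +ᵥ E) :
    (2:ℝ)⁻¹ • (A - A) ⊆ E := by
  rintro _ ⟨_, ⟨_, ha, _, hb, rfl⟩, rfl⟩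
  obtain ⟨x, hx, rfl⟩ := hA ha
  obtain ⟨y, hy, rfl⟩ := hA hb
  convert hconv hx (hneg y hy) (by norm_num : (0:ℝ) ≤ 2⁻¹) (by norm_num : (0:ℝ) ≤ 2⁻¹)
    (by norm_num) using 1
  simp only [vadd_eq_add]
  module

namespace IsOriginEllipse

variable {E : Set Plane} (h : IsOriginEllipse E)
include h

theorem isCompact : IsCompact E := by
  obtain ⟨L, rfl⟩ := h
  exact (isCompact_closedBall 0 1).image L.toLinearMap.continuous_of_finiteDimensional

theorem convex : Convex ℝ E := by
  obtain ⟨L, rfl⟩ := h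
  exact (convex_closedBall 0 1).linear_image L.toLinearMap

theorem neg_mem {x : Plane} (hx : x ∈ E) : -x ∈ E := by
  obtain ⟨L, rfl⟩ := h
  obtain ⟨y, hy, rfl⟩ := hx
  exact ⟨-y, by simpa using hy, map_neg L y⟩

end IsOriginEllipse

theorem ellipse_overlap_maximized_at_center (E₁ E₂ : Set Plane)
    (h₁ : IsOriginEllipse E₁) (h₂ : IsOriginEllipse E₂) (t : Plane) :
    volume (E₁ ∩ (t +ᵥ E₂)) ≤ volume (E₁ ∩ E₂) := by
  set A := E₁ ∩ (t +ᵥ E₂)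
  have hA : IsCompact A := h₁.isCompact.inter_right (h₂.isCompact.vadd t).isClosed
  have hconv : Convex ℝ A := h₁.convex.inter (h₂.convex.translate t)
  have hsub : (2:ℝ)⁻¹ • (A - A) ⊆ E₁ ∩ E₂ := Set.subset_inter
    (h₁.convex.half_smul_sub_subset (fun _ => h₁.neg_mem)
      (Set.inter_subset_left.trans (zero_vadd Plane E₁).symm.subset))
    (h₂.convex.half_smul_sub_subset (fun _ => h₂.neg_mem) Set.inter_subset_right)
  exact (hconv.volume_le_volume_half_smul_sub_self hA).trans (measure_mono hsub)
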